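/- Let ζ = i ∈ ℂ (a primitive 4th root of unity) and for a natural number d define the Vafa–Intriligator sum S_d = Σ_{0 ≤ i₂ < i₁ ≤ 3} (ζ^{i₁} + ζ^{i₂})^{4d+4} · (ζ^{i₁} − ζ^{i₂}) · (ζ^{i₂} − ζ^{i₁}) / (ζ^{i₁} · ζ^{i₂})³. For d = 3 one has −(1/16) · S_3 = 128. (This is the degree of the Quot scheme R_3 under the generalized Plücker embedding, which the paper also obtains as 128 by Bott's residue formula applied to the 24 fixed-point components of the ℂ*-action on R_3.) -/

import Mathlib

/-!
Of the six pairs of distinct 4th roots of unity, the two antipodal pairs `{a, -a}` contribute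
nothing because `σ₁` vanishes on them. Every other pair is `{a, i a}`, and since the summand is
homogeneous of degree `4d` it contributes `(1 + i)^(4d+4) (i - 1)(1 - i) / i³ = -2 (-4)^(d+1)`.
Hence `S_d = -8 (-4)^(d+1)`, and `S_3 = -2048`.
-/

open Finset Complex

/-- The Vafa–Intriligator sum for `G(2,4)` in degree `d`, with `ζ = i` a
primitive 4th root of unity. -/
noncomputable def vafaIntriligatorSum (d : ℕ) : ℂ :=
  ∑ i₁ ∈ Finset.range 4, ∑ i₂ ∈ Finset.range i₁,
    (Complex.I ^ i₁ + Complex.I ^ i₂) ^ (4 * d + 4) *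
      (Complex.I ^ i₁ - Complex.I ^ i₂) * (Complex.I ^ i₂ - Complex.I ^ i₁) /
        (Complex.I ^ i₁ * Complex.I ^ i₂) ^ 3

namespace VafaIntriligator

variable {K : Type*} [Field K]

def term (n : ℕ) (a b : K) : K :=
  (a + b) ^ n * (a - b) * (b - a) / (a * b) ^ 3

theorem term_comm (n : ℕ) (a b : K) : term n a b = term n b a := by
  unfold term; ring

theorem term_neg_right {n : ℕ} (hn : n ≠ 0) (a : K) : term n a (-a) = 0 := by
  simp [term, hn]

theorem term_mul_left_eq {i a : K} (hi : i ^ 2 = -1) (ha : a ^ 4 = 1) (d : ℕ) :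
    term (4 * d + 4) (i * a) a = -2 * (-4) ^ (d + 1) := by
  have ha₀ : a ≠ 0 := by rintro rfl; norm_num at ha
  have hi₀ : i ≠ 0 := by rintro rfl; norm_num at hi
  have hsum : (i * a + a) ^ (4 * d + 4) = (-4) ^ (d + 1) := by
    have h4 : (i + 1) ^ 4 = -4 := by linear_combination (i ^ 2 + 4 * i + 5) * hi
    rw [show i * a + a = (i + 1) * a by ring, mul_pow, show 4 * d + 4 = 4 * (d + 1) by ring,
      pow_mul, pow_mul, h4, ha, one_pow, mul_one]
  have hrest : (i * a - a) * (a - i * a) / (i * a * a) ^ 3 = -2 := by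
    field_simp
    linear_combination (2 * i - 1) * hi + 2 * i ^ 3 * ha
  rw [term, hsum, mul_assoc, mul_div_assoc, hrest, mul_comm]

end VafaIntriligator

open VafaIntriligator in
theorem vafaIntriligatorSum_eq (d : ℕ) : vafaIntriligatorSum d = -8 * (-4) ^ (d + 1) := by
  have hI3 : I ^ 3 = -I := by rw [pow_succ, I_sq, neg_one_mul]
  have hn : 4 * d + 4 ≠ 0 := by omega
  have hterm (i₁ i₂ : ℕ) : (I ^ i₁ + I ^ i₂) ^ (4 * d + 4) * (I ^ i₁ - I ^ i₂) *
      (I ^ i₂ - I ^ i₁) / (I ^ i₁ * I ^ i₂) ^ 3 = term (4 * d + 4) (I ^ i₁) (I ^ i₂) := rfl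
  simp only [vafaIntriligatorSum, hterm, sum_range_succ, sum_range_zero, zero_add,
    pow_zero, pow_one, I_sq, hI3]
  have h₁₀ : term (4 * d + 4) I 1 = -2 * (-4) ^ (d + 1) := by
    simpa using term_mul_left_eq I_sq (one_pow 4) d
  have h₂₁ : term (4 * d + 4) (-1) I = -2 * (-4) ^ (d + 1) := by
    simpa using term_mul_left_eq I_sq I_pow_four d
  have h₃₂ : term (4 * d + 4) (-I) (-1) = -2 * (-4) ^ (d + 1) := by
    simpa using term_mul_left_eq (a := -1) I_sq (by norm_num) d
  have h₃₀ : term (4 * d + 4) (-I) 1 = -2 * (-4) ^ (d + 1) := by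
    rw [term_comm]
    simpa using term_mul_left_eq (a := -I) I_sq (by rw [neg_pow, I_pow_four]; norm_num) d
  have h₂₀ : term (4 * d + 4) (-1 : ℂ) 1 = 0 := by simpa using term_neg_right hn (-1 : ℂ)
  have h₃₁ : term (4 * d + 4) (-I) I = 0 := by simpa using term_neg_right hn (-I)
  rw [h₁₀, h₂₁, h₃₂, h₃₀, h₂₀, h₃₁]
  ring

/-- The degree of the Quot scheme `R_3` under the generalized Plücker
embedding: `−(1/16) · S_3 = 128`. -/
theorem pluecker_degree_R3 :
    -(1 / 16 : ℂ) * vafaIntriligatorSum 3 = 128 := by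
  rw [vafaIntriligatorSum_eq]
  norm_num
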